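/- arXiv:2509.03217 — 2 statements merged into one kernel-verified Lean document; each statement's English description precedes it below -/
import Mathlib

section
/- Let λ ∈ Γ₂ ⊂ ℝⁿ with λ₁ ≥ ... ≥ λₙ. Then σ₂(λ)/σ₁(λ) ≤ σ₁(λ) - λ₁ ≤ ((n-1)/n)·σ₁(λ). -/
open Finset

theorem stmt_3 (n : ℕ) (hn : 0 < n) (lam : Fin n → ℝ)
    (h1 : 0 < ∑ i, lam i)
    (h2 : 0 < ∑ i, ∑ j, if i < j then lam i * lam j else 0)
    (hsort : ∀ i j : Fin n, i ≤ j → lam j ≤ lam i) :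
    (∑ i, ∑ j, if i < j then lam i * lam j else 0) / (∑ i, lam i) ≤
        (∑ i, lam i) - lam ⟨0, hn⟩ ∧
      (∑ i, lam i) - lam ⟨0, hn⟩ ≤ (((n : ℝ) - 1) / (n : ℝ)) * ∑ i, lam i := by
  set S := ∑ i, lam i with hS
  set S2 := ∑ i, ∑ j, if i < j then lam i * lam j else 0 with hS2
  set a := lam ⟨0, hn⟩ with ha
  set Q := ∑ i, (lam i)^2 with hQ
  -- key identity: S^2 = 2*S2 + Q
  have key : S^2 = 2 * S2 + Q := by
    have e1 : S * S = ∑ i, ∑ j, lam i * lam j := by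
      rw [Finset.sum_mul_sum]
    have e2 : ∀ i j : Fin n, lam i * lam j =
        (if i < j then lam i * lam j else 0) +
        (if j < i then lam i * lam j else 0) +
        (if i = j then lam i * lam j else 0) := by
      intro i j
      rcases lt_trichotomy i j with h | h | h
      · simp [h, h.ne, (not_lt_of_gt h), h.ne']
      · simp [h]
      · simp [h, h.ne, h.ne', not_lt_of_gt h]
    have e3 : ∑ i, ∑ j, lam i * lam j = S2 + S2 + Q := by
      have : ∑ i : Fin n, ∑ j : Fin n, lam i * lam j =
          (∑ i : Fin n, ∑ j : Fin n, if i < j then lam i * lam j else 0) +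
          (∑ i : Fin n, ∑ j : Fin n, if j < i then lam i * lam j else 0) +
          (∑ i : Fin n, ∑ j : Fin n, if i = j then lam i * lam j else 0) := by
        rw [← Finset.sum_add_distrib, ← Finset.sum_add_distrib]
        refine Finset.sum_congr rfl fun i _ => ?_
        rw [← Finset.sum_add_distrib, ← Finset.sum_add_distrib]
        exact Finset.sum_congr rfl fun j _ => e2 i j
      rw [this]
      congr 1
      · congr 1
        rw [Finset.sum_comm]
        refine Finset.sum_congr rfl fun i _ => Finset.sum_congr rfl fun j _ => ?_
        rcases lt_or_ge i j with h | h
        · simp [h, mul_comm]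
        · simp [not_lt_of_ge h]
      · rw [hQ]
        refine Finset.sum_congr rfl fun i _ => ?_
        simp [Finset.sum_ite_eq, sq]
    have := e1.trans e3
    nlinarith [this]
  have haQ : a^2 ≤ Q := by
    rw [hQ]
    exact Finset.single_le_sum (fun i _ => sq_nonneg (lam i)) (Finset.mem_univ _)
  have hSa : S ≤ n * a := by
    calc S = ∑ i : Fin n, lam i := rfl
      _ ≤ ∑ _i : Fin n, a := by
          refine Finset.sum_le_sum fun i _ => hsort ⟨0, hn⟩ i ?_
          exact Fin.mk_le_of_le_val (Nat.zero_le _)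
      _ = n * a := by simp [mul_comm]
  constructor
  · rw [div_le_iff₀ h1]
    nlinarith [sq_nonneg (S - a)]
  · have hn' : (0:ℝ) < n := by exact_mod_cast hn
    rw [div_mul_eq_mul_div, le_div_iff₀ hn']
    nlinarith
end

section
/- Let λ ∈ Γ₂ ⊂ ℝⁿ with n > 2 and λ₁ ≥ ... ≥ λₙ. Then for any index i ≥ 2, (1 - 1/√2)·σ₁(λ) ≤ σ₁(λ) - λᵢ ≤ ((2n-2)/n)·σ₁(λ). -/
open Finset

lemma sq_sum_eq (n : ℕ) (lam : Fin n → ℝ) :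
    (∑ k, lam k)^2 = ∑ k, (lam k)^2
      + 2 * ∑ i, ∑ j, (if i < j then lam i * lam j else 0) := by
  have h : ∀ i j : Fin n, lam i * lam j =
      (if i = j then lam i ^ 2 else 0) + ((if i < j then lam i * lam j else 0)
        + (if j < i then lam i * lam j else 0)) := by
    intro i j
    rcases lt_trichotomy i j with h | h | h
    · simp [h, h.ne, asymm h]
    · subst h; simp [sq]
    · simp [h, h.ne', asymm h]
  calc (∑ k, lam k)^2 = ∑ i, ∑ j, lam i * lam j := by
        rw [sq, Finset.sum_mul_sum]
    _ = ∑ i, ∑ j, ((if i = j then lam i ^ 2 else 0)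
          + ((if i < j then lam i * lam j else 0)
            + (if j < i then lam i * lam j else 0))) := by
        simp_rw [← h]
    _ = ∑ k, (lam k)^2 + 2 * ∑ i, ∑ j, (if i < j then lam i * lam j else 0) := by
        simp_rw [Finset.sum_add_distrib]
        have e1 : ∑ i : Fin n, ∑ j : Fin n, (if i = j then lam i ^ 2 else 0)
            = ∑ k, (lam k)^2 := by
          simp
        have e2 : ∑ i : Fin n, ∑ j : Fin n, (if j < i then lam i * lam j else 0)
            = ∑ i : Fin n, ∑ j : Fin n, (if i < j then lam i * lam j else 0) := by
          rw [Finset.sum_comm]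
          simp_rw [mul_comm]
        rw [e1, e2]; ring

theorem stmt_4 (n : ℕ) (hn : 2 < n) (lam : Fin n → ℝ)
    (h1 : 0 < ∑ i, lam i)
    (h2 : 0 < ∑ i, ∑ j, if i < j then lam i * lam j else 0)
    (hsort : ∀ i j : Fin n, i ≤ j → lam j ≤ lam i)
    (i : Fin n) (hi : 1 ≤ (i : ℕ)) :
    (1 - 1 / Real.sqrt 2) * (∑ k, lam k) ≤ (∑ k, lam k) - lam i ∧
      (∑ k, lam k) - lam i ≤ ((2 * (n : ℝ) - 2) / (n : ℝ)) * ∑ k, lam k := by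
  have npos : (0:ℝ) < n := by positivity
  set S := ∑ k, lam k with hS
  have hQ : ∑ k, (lam k)^2 < S^2 := by
    have := sq_sum_eq n lam
    nlinarith [h2]
  constructor
  · -- upper bound on lam i : lam i ≤ S / sqrt 2
    have s2pos : (0:ℝ) < Real.sqrt 2 := by positivity
    have s2sq : Real.sqrt 2 ^ 2 = 2 := Real.sq_sqrt (by norm_num)
    rcases le_or_gt (lam i) 0 with hneg | hpos
    · have h12 : (1:ℝ) / Real.sqrt 2 > 0 := by positivity
      nlinarith
    · set z : Fin n := ⟨0, by omega⟩ with hz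
      have i0 : z ≤ i := by simp [hz, Fin.le_def]
      have h0i : lam i ≤ lam z := hsort z i i0
      have hne : z ≠ i := by
        intro h; rw [← h] at hi; simp [hz] at hi
      have hpair : lam z ^ 2 + lam i ^ 2 ≤ ∑ k, (lam k)^2 := by
        have hsub : ({z, i} : Finset (Fin n)) ⊆ Finset.univ := Finset.subset_univ _
        have := Finset.sum_le_sum_of_subset_of_nonneg hsub
          (fun j _ _ => sq_nonneg (lam j))
        rwa [Finset.sum_pair hne] at this
      have h2sq : 2 * lam i ^ 2 < S ^ 2 := by nlinarith
      have key : Real.sqrt 2 * lam i < S := by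
        nlinarith [sq_nonneg (S - Real.sqrt 2 * lam i), sq_nonneg (S + Real.sqrt 2 * lam i)]
      rw [sub_mul, one_mul, div_mul_eq_mul_div, one_mul]
      rw [sub_le_sub_iff_left, le_div_iff₀ s2pos]
      nlinarith
  · -- lower bound on lam i via last entry
    have hn1 : 1 ≤ n := by omega
    set m : Fin n := ⟨n - 1, by omega⟩ with hm
    have hmin : ∀ j : Fin n, lam m ≤ lam j := by
      intro j
      have hj := j.isLt
      exact hsort j m (Fin.le_def.mpr (Nat.le_pred_of_lt hj))
    have hnt : n * lam m ≤ S := by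
      have : ∑ _k : Fin n, lam m ≤ S := Finset.sum_le_sum (fun j _ => hmin j)
      simpa using this
    have herase : ∑ j ∈ Finset.univ.erase m, lam j = S - lam m := by
      have := Finset.sum_erase_add Finset.univ lam (Finset.mem_univ m)
      linarith
    have herase2 : ∑ j ∈ Finset.univ.erase m, (lam j)^2 = (∑ k, (lam k)^2) - lam m ^ 2 := by
      have := Finset.sum_erase_add Finset.univ (fun j => (lam j)^2) (Finset.mem_univ m)
      linarith
    have hcard : ((Finset.univ.erase m).card : ℝ) = (n : ℝ) - 1 := by
      rw [Finset.card_erase_of_mem (Finset.mem_univ m), Finset.card_univ, Fintype.card_fin,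
        Nat.cast_sub hn1, Nat.cast_one]
    have hcs : (S - lam m)^2 ≤ ((n:ℝ) - 1) * ((∑ k, (lam k)^2) - lam m ^ 2) := by
      have := sq_sum_le_card_mul_sum_sq (s := Finset.univ.erase m) (f := lam)
      rw [herase, herase2, hcard] at this
      exact this
    -- (n * lam m + (n-2) * S) * (lam m - S) < 0 and lam m - S < 0
    have hn3 : (3:ℝ) ≤ n := by exact_mod_cast hn
    have hmS : lam m < S := by nlinarith [hnt, hn3, h1]
    have hfac : ((n:ℝ) * lam m + ((n:ℝ) - 2) * S) * (lam m - S) < 0 := by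
      nlinarith [mul_pos (show (0:ℝ) < (n:ℝ) - 1 by linarith)
        (show (0:ℝ) < S^2 - ∑ k, (lam k)^2 by linarith)]
    have hlow : 0 < (n:ℝ) * lam m + ((n:ℝ) - 2) * S := by
      nlinarith
    have hil : lam m ≤ lam i := hmin i
    rw [div_mul_eq_mul_div, le_div_iff₀ npos]
    nlinarith
end
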